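/- Let X be a Tychonoff (completely regular Hausdorff) topological space with at least two points. Then X has an isolated point if and only if the annihilating-ideal graph of C(X) is not triangulated; that is, X has no isolated point if and only if for every I ∈ A(X) there exist J, K ∈ A(X) such that I, J, K are pairwise distinct and I·J = {0}, J·K = {0}, and I·K = {0}. -/
import Mathlib


open Set

/-- `annIdeal I` is `Ann(I)`, the annihilator of the ideal `I` of `C(X, ℝ)`. -/
def annIdeal {X : Type*} [TopologicalSpace X] (I : Ideal C(X, ℝ)) : Ideal C(X, ℝ) where
  carrier := {g | ∀ f ∈ I, g * f = 0}
  add_mem' := by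
    intro a b ha hb f hf
    rw [add_mul, ha f hf, hb f hf, add_zero]
  zero_mem' := fun f _ => zero_mul f
  smul_mem' := by
    intro c g hg f hf
    rw [smul_eq_mul, mul_assoc, hg f hf, mul_zero]

/-- `annSet X` is `A(X)`: the set of nonzero ideals of `C(X, ℝ)` with nonzero annihilator. -/
def annSet (X : Type*) [TopologicalSpace X] : Set (Ideal C(X, ℝ)) :=
  {I | I ≠ ⊥ ∧ annIdeal I ≠ ⊥}

namespace AuxAIG

variable {X : Type*} [TopologicalSpace X]

/-- Evaluation at a point as a ring homomorphism. -/
def evalHom (p : X) : C(X, ℝ) →+* ℝ where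
  toFun f := f p
  map_one' := rfl
  map_mul' _ _ := rfl
  map_zero' := rfl
  map_add' _ _ := rfl

lemma mul_bot_pointwise {I J : Ideal C(X, ℝ)} (h : I * J = ⊥) :
    ∀ f ∈ I, ∀ g ∈ J, f * g = 0 := fun f hf g hg =>
  Ideal.mem_bot.mp (Ideal.mul_le.mp h.le f hf g hg)

lemma eq_zero_of_sq (f : C(X, ℝ)) (h : f * f = 0) : f = 0 := by
  ext z
  have := DFunLike.congr_fun h z
  simpa [mul_self_eq_zero] using this

lemma ne_of_mul_bot {I J : Ideal C(X, ℝ)} (hI : I ≠ ⊥) (h : I * J = ⊥) : I ≠ J := by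
  rintro rfl
  apply hI
  rw [eq_bot_iff]
  intro f hf
  rw [Submodule.mem_bot]
  exact eq_zero_of_sq f (mul_bot_pointwise h f hf f hf)

lemma mul_span_eq_bot (I : Ideal C(X, ℝ)) (b : C(X, ℝ)) (h : ∀ f ∈ I, f * b = 0) :
    I * Ideal.span {b} = ⊥ := by
  rw [eq_bot_iff]
  refine Ideal.mul_le.mpr fun r hr s hs => ?_
  rcases Ideal.mem_span_singleton'.mp hs with ⟨c, rfl⟩
  rw [Ideal.mem_bot, show r * (c * b) = c * (r * b) by ring, h r hr, mul_zero]

/-- A bump function: `1` at `x`, vanishing outside the open set `U`. -/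
lemma exists_bump [T35Space X] {x : X} {U : Set X} (hU : IsOpen U) (hx : x ∈ U) :
    ∃ h : C(X, ℝ), h x = 1 ∧ ∀ z, z ∉ U → h z = 0 := by
  obtain ⟨f, cf, hfx, hfK⟩ := CompletelyRegularSpace.completely_regular x Uᶜ
    hU.isClosed_compl (by simp [hx])
  refine ⟨⟨fun z => 1 - (f z : ℝ), by continuity⟩, ?_, ?_⟩
  · simp [hfx]
  · intro z hz
    have h1 : f z = 1 := hfK hz
    simp [h1]

end AuxAIG

open AuxAIG in
/-- A Tychonoff space `X` with at least two points has an isolated point iff the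
annihilating-ideal graph of `C(X)` is not triangulated, i.e. it is not the case that every
vertex `I ∈ A(X)` lies on a triangle of the graph. -/
theorem isolated_point_iff_not_triangulated {X : Type*} [TopologicalSpace X] [T35Space X]
    [Nontrivial X] :
    (∃ p : X, IsOpen ({p} : Set X)) ↔
      ¬ ∀ I ∈ annSet X, ∃ J ∈ annSet X, ∃ K ∈ annSet X,
        I ≠ J ∧ J ≠ K ∧ I ≠ K ∧ I * J = ⊥ ∧ J * K = ⊥ ∧ I * K = ⊥ := by
  constructor
  · -- isolated point ⇒ not triangulated
    rintro ⟨p, hp⟩ htri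
    obtain ⟨e, hep, he0⟩ := exists_bump hp (mem_singleton p)
    have he0' : ∀ z, z ≠ p → e z = 0 := fun z hz => he0 z (by simpa using hz)
    obtain ⟨q, hq⟩ := exists_ne p
    set Mp : Ideal C(X, ℝ) := RingHom.ker (evalHom p) with hMp
    have memMp : ∀ f : C(X, ℝ), f ∈ Mp ↔ f p = 0 := fun f => RingHom.mem_ker
    -- Mp ∈ annSet X
    have hf1 : (1 - e : C(X, ℝ)) ∈ Mp := by
      rw [memMp]
      show (1 : C(X, ℝ)) p - e p = 0
      rw [hep]
      simp
    have hf1ne : (1 - e : C(X, ℝ)) ≠ 0 := by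
      intro h
      have := DFunLike.congr_fun h q
      simp [he0' q hq] at this
    have hMpne : Mp ≠ ⊥ := by
      intro h
      exact hf1ne (Submodule.mem_bot _ |>.mp (h ▸ hf1))
    have heAnn : e ∈ annIdeal Mp := by
      intro f hf
      ext z
      by_cases hz : z = p
      · subst hz; simp [(memMp f).mp hf]
      · simp [he0' z hz]
    have hene : e ≠ 0 := by
      intro h
      have := DFunLike.congr_fun h p
      simp [hep] at this
    have hAnnne : annIdeal Mp ≠ ⊥ := by
      intro h
      exact hene (Submodule.mem_bot _ |>.mp (h ▸ heAnn))
    obtain ⟨J, hJA, K, hKA, hIJ, hJK, hIK, hmIJ, hmJK, hmIK⟩ :=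
      htri Mp ⟨hMpne, hAnnne⟩
    -- any ideal adjacent to Mp which is nonzero equals span {e}
    have key : ∀ L : Ideal C(X, ℝ), L ≠ ⊥ → Mp * L = ⊥ → L = Ideal.span {e} := by
      intro L hLne hML
      have hpt := mul_bot_pointwise hML
      have hform : ∀ g ∈ L, g = ContinuousMap.const X (g p) * e := by
        intro g hg
        ext z
        by_cases hz : z = p
        · subst hz; simp [hep]
        · have h0 : (1 - e) * g = 0 := hpt _ hf1 g hg
          have := DFunLike.congr_fun h0 z
          simp [he0' z hz] at this ⊢
          exact this
      apply le_antisymm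
      · intro g hg
        exact Ideal.mem_span_singleton'.mpr ⟨ContinuousMap.const X (g p), (hform g hg).symm⟩
      · obtain ⟨g, hg, hgne⟩ := Submodule.ne_bot_iff L |>.mp hLne
        have hgp : g p ≠ 0 := by
          intro h
          apply hgne
          rw [hform g hg, h]
          ext z; simp
        have heL : e ∈ L := by
          have : ContinuousMap.const X (g p)⁻¹ * g ∈ L := Ideal.mul_mem_left _ _ hg
          have heq : ContinuousMap.const X (g p)⁻¹ * g = e := by
            ext z
            have hz := DFunLike.congr_fun (hform g hg) z
            simp only [ContinuousMap.mul_apply, ContinuousMap.const_apply] at hz ⊢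
            rw [hz, ← mul_assoc, inv_mul_cancel₀ hgp, one_mul]
          rwa [heq] at this
        rw [Ideal.span_le, singleton_subset_iff]
        exact heL
    have hJe : J = Ideal.span {e} := key J hJA.1 hmIJ
    have hKe : K = Ideal.span {e} := key K hKA.1 hmIK
    exact hJK (hJe.trans hKe.symm)
  · -- not triangulated ⇒ isolated point
    intro hnt
    by_contra hno
    push_neg at hno
    apply hnt
    intro I hI
    obtain ⟨hIne, hAnn⟩ := hI
    obtain ⟨g, hgmem, hgne⟩ := Submodule.ne_bot_iff _ |>.mp hAnn
    have hgx : ∃ x, g x ≠ 0 := by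
      by_contra h
      push_neg at h
      exact hgne (by ext z; simp [h z])
    obtain ⟨x, hx⟩ := hgx
    have hcoz : IsOpen {z | g z ≠ 0} := by
      have : {z | g z ≠ 0} = g ⁻¹' ({0}ᶜ) := by ext z; simp
      rw [this]
      exact isOpen_compl_singleton.preimage g.continuous
    -- since {x} is not open, the cozero set of g contains another point y
    have hy : ∃ y, g y ≠ 0 ∧ y ≠ x := by
      by_contra h
      push_neg at h
      apply hno x
      have : {z | g z ≠ 0} = {x} := by
        ext z
        simp only [mem_setOf_eq, mem_singleton_iff]
        exact ⟨fun hz => h z hz, fun hz => hz ▸ hx⟩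
      rw [← this]
      exact hcoz
    obtain ⟨y, hgy, hyx⟩ := hy
    obtain ⟨U, V, hUo, hVo, hxU, hyV, hUV⟩ := t2_separation hyx.symm
    obtain ⟨h1, h1x, h10⟩ := exists_bump (hUo.inter hcoz) ⟨hxU, hx⟩
    obtain ⟨h2, h2y, h20⟩ := exists_bump (hVo.inter hcoz) ⟨hyV, hgy⟩
    have h12 : h1 * h2 = 0 := by
      ext z
      by_cases hz : z ∈ U ∩ {z | g z ≠ 0}
      · have : z ∉ V ∩ {z | g z ≠ 0} := fun hz' =>
          (disjoint_left.mp hUV hz.1) hz'.1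
        simp [h20 z this]
      · simp [h10 z hz]
    have h21 : h2 * h1 = 0 := by rw [mul_comm]; exact h12
    have hIh1 : ∀ f ∈ I, f * h1 = 0 := by
      intro f hf
      ext z
      by_cases hz : z ∈ U ∩ {z | g z ≠ 0}
      · have hfz : f z = 0 := by
          have := DFunLike.congr_fun (hgmem f hf) z
          simp only [ContinuousMap.mul_apply, ContinuousMap.zero_apply] at this
          exact (mul_eq_zero.mp this).resolve_left hz.2
        simp [hfz]
      · simp [h10 z hz]
    have hIh2 : ∀ f ∈ I, f * h2 = 0 := by
      intro f hf
      ext z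
      by_cases hz : z ∈ V ∩ {z | g z ≠ 0}
      · have hfz : f z = 0 := by
          have := DFunLike.congr_fun (hgmem f hf) z
          simp only [ContinuousMap.mul_apply, ContinuousMap.zero_apply] at this
          exact (mul_eq_zero.mp this).resolve_left hz.2
        simp [hfz]
      · simp [h20 z hz]
    have h1ne : h1 ≠ 0 := fun h => by
      have := DFunLike.congr_fun h x; simp [h1x] at this
    have h2ne : h2 ≠ 0 := fun h => by
      have := DFunLike.congr_fun h y; simp [h2y] at this
    have hJne : Ideal.span {h1} ≠ ⊥ := by
      simpa [Ideal.span_singleton_eq_bot] using h1ne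
    have hKne : Ideal.span {h2} ≠ ⊥ := by
      simpa [Ideal.span_singleton_eq_bot] using h2ne
    have hJKbot : Ideal.span {h1} * Ideal.span {h2} = ⊥ := by
      rw [Ideal.span_singleton_mul_span_singleton, h12, Ideal.span_singleton_eq_bot]
    have hJann : annIdeal (Ideal.span {h1}) ≠ ⊥ := by
      intro h
      apply h2ne
      rw [← Submodule.mem_bot (R := C(X, ℝ)), ← h]
      intro f hf
      rcases Ideal.mem_span_singleton'.mp hf with ⟨c, rfl⟩
      rw [show h2 * (c * h1) = c * (h2 * h1) by ring, h21, mul_zero]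
    have hKann : annIdeal (Ideal.span {h2}) ≠ ⊥ := by
      intro h
      apply h1ne
      rw [← Submodule.mem_bot (R := C(X, ℝ)), ← h]
      intro f hf
      rcases Ideal.mem_span_singleton'.mp hf with ⟨c, rfl⟩
      rw [show h1 * (c * h2) = c * (h1 * h2) by ring, h12, mul_zero]
    have hmIJ : I * Ideal.span {h1} = ⊥ := mul_span_eq_bot I h1 hIh1
    have hmIK : I * Ideal.span {h2} = ⊥ := mul_span_eq_bot I h2 hIh2
    refine ⟨Ideal.span {h1}, ⟨hJne, hJann⟩, Ideal.span {h2}, ⟨hKne, hKann⟩,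
      ne_of_mul_bot hIne hmIJ, ne_of_mul_bot hJne hJKbot, ne_of_mul_bot hIne hmIK,
      hmIJ, hJKbot, hmIK⟩
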